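/- arXiv:1010.3992 — 2 statements merged into one kernel-verified Lean document; each statement's English description precedes it below -/
import Mathlib

section
/- Consider the system of equations in positive reals x₂, x₃, x₄, x₅ obtained by setting the following expressions to zero: (i) x₃x₄²x₅ − x₂³(x₄ + 2x₄x₅) − x₂²x₃(−1 + x₄² − 10x₄x₅ + x₅²) + x₂x₄(x₃² − 10x₃x₅ + x₅(2 + x₅)); (ii) −10x₂²x₅ − x₃x₄x₅ + 3x₂³(1 + x₅) + x₂(10x₃x₅ − 3x₃²(1 + x₅) + x₅(1 + x₅)); (iii) −x₃x₄²x₅ − 2x₂³x₄(1 + x₅) + 2x₂x₄(x₃² − x₅)(1 + x₅) + 2x₂²(5x₄x₅ + x₃(1 − x₄² − 4x₅ + x₅²)); (iv) x₂³x₄ + x₃x₄²x₅ + x₂²x₃(−1 − 10x₄ + 3x₄² + 8x₅ − 3x₅²) + x₂x₄(x₃² − x₅²). Then (x₂, x₃, x₄, x₅) = (4/5, 1/5, 8/5, 3/5) is a solution. -/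
/-- The four numerators of the Einstein equations for SO(7)/U(1)×U(2), normalized
with x₁ = 1. -/
def E1 (x2 x3 x4 x5 : ℝ) : ℝ :=
  x3 * x4 ^ 2 * x5 - x2 ^ 3 * (x4 + 2 * x4 * x5)
    - x2 ^ 2 * x3 * (-1 + x4 ^ 2 - 10 * x4 * x5 + x5 ^ 2)
    + x2 * x4 * (x3 ^ 2 - 10 * x3 * x5 + x5 * (2 + x5))

def E2 (x2 x3 x4 x5 : ℝ) : ℝ :=
  -10 * x2 ^ 2 * x5 - x3 * x4 * x5 + 3 * x2 ^ 3 * (1 + x5)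
    + x2 * (10 * x3 * x5 - 3 * x3 ^ 2 * (1 + x5) + x5 * (1 + x5))

def E3 (x2 x3 x4 x5 : ℝ) : ℝ :=
  -(x3 * x4 ^ 2 * x5) - 2 * x2 ^ 3 * x4 * (1 + x5)
    + 2 * x2 * x4 * (x3 ^ 2 - x5) * (1 + x5)
    + 2 * x2 ^ 2 * (5 * x4 * x5 + x3 * (1 - x4 ^ 2 - 4 * x5 + x5 ^ 2))

def E4 (x2 x3 x4 x5 : ℝ) : ℝ :=
  x2 ^ 3 * x4 + x3 * x4 ^ 2 * x5
    + x2 ^ 2 * x3 * (-1 - 10 * x4 + 3 * x4 ^ 2 + 8 * x5 - 3 * x5 ^ 2)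
    + x2 * x4 * (x3 ^ 2 - x5 ^ 2)

/-- `(x₂, x₃, x₄, x₅) = (4/5, 1/5, 8/5, 3/5)` solves the Einstein system. -/
theorem stmt_17 (x2 x3 x4 x5 : ℝ)
    (h2 : x2 = 4 / 5) (h3 : x3 = 1 / 5) (h4 : x4 = 8 / 5) (h5 : x5 = 3 / 5) :
    0 < x2 ∧ 0 < x3 ∧ 0 < x4 ∧ 0 < x5 ∧
    E1 x2 x3 x4 x5 = 0 ∧ E2 x2 x3 x4 x5 = 0 ∧ E3 x2 x3 x4 x5 = 0 ∧ E4 x2 x3 x4 x5 = 0 := by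
  subst h2 h3 h4 h5
  norm_num [E1, E2, E3, E4]
end

section
/- With the same four polynomial equations as in the Einstein system for SO(7)/U(1)×U(2) (normalized x₁ = 1), each of the tuples (x₂, x₃, x₄, x₅) = (4/3, 1/3, 8/3, 5/3), (2/3, 5/3, 4/3, 7/3), and (2/7, 5/7, 4/7, 3/7) is a solution of the system. -/
/-- The Einstein system for SO(7)/U(1)×U(2) (normalized x₁ = 1). -/
def EinsteinSys (x2 x3 x4 x5 : ℝ) : Prop :=
  E1 x2 x3 x4 x5 = 0 ∧ E2 x2 x3 x4 x5 = 0 ∧ E3 x2 x3 x4 x5 = 0 ∧ E4 x2 x3 x4 x5 = 0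

/-- Each of `(4/3, 1/3, 8/3, 5/3)`, `(2/3, 5/3, 4/3, 7/3)` and `(2/7, 5/7, 4/7, 3/7)`
solves the Einstein system. -/
theorem stmt_18 :
    EinsteinSys (4 / 3) (1 / 3) (8 / 3) (5 / 3) ∧
    EinsteinSys (2 / 3) (5 / 3) (4 / 3) (7 / 3) ∧
    EinsteinSys (2 / 7) (5 / 7) (4 / 7) (3 / 7) := by
  refine ⟨⟨?_,?_,?_,?_⟩,⟨?_,?_,?_,?_⟩,?_,?_,?_,?_⟩ <;> norm_num [E1,E2,E3,E4]
end
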